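/- For a ring R, the following are equivalent: (1) R is δ-reversible; (2) for every r ∈ R, r² = 0 implies r ∈ δ(R); (3) for every r ∈ R, if r² = 0 then rm − mr ∈ δ(R) for all m ∈ R. -/

import Mathlib

/-- A right ideal `I` of `R` (a submodule of `R` as a right `R`-module, i.e. an
`Rᵐᵒᵖ`-submodule) is essential if every right ideal meeting it trivially is trivial. -/
def IsEssentialRightIdeal (R : Type*) [Ring R] (I : Submodule Rᵐᵒᵖ R) : Prop :=
  ∀ K : Submodule Rᵐᵒᵖ R, K ⊓ I = ⊥ → K = ⊥

/-- The Zhou radical `δ(R)`: the intersection of all essential maximal right ideals of `R`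
(the whole ring if there are no essential maximal right ideals). -/
def zhouRadical (R : Type*) [Ring R] : Set R :=
  ⋂₀ { S : Set R | ∃ I : Submodule Rᵐᵒᵖ R, IsCoatom I ∧ IsEssentialRightIdeal R I ∧ S = ↑I }

/-- A ring `R` is `δ`-reversible if `a * b = 0` implies `b * a ∈ δ(R)`. -/
def IsDeltaReversible (R : Type*) [Ring R] : Prop :=
  ∀ a b : R, a * b = 0 → b * a ∈ zhouRadical R

/-!
`δ(R)` is a two-sided ideal: the preimage of an essential maximal right ideal under left
multiplication is again essential and is either maximal or everything. It also satisfies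
`r R r ⊆ δ(R) → r ∈ δ(R)`: if a maximal right ideal `M` misses `r`, then `1 = m + r s` with
`m ∈ M`, so `r = m r + r s r ∈ M`. For a square-zero `r`, conditions (1) and (3) both put
every `r s r` into `δ(R)`: (1) via `r (r s) = 0`, (3) via `r s r = (r s - s r) r`. Conversely
`a b = 0` makes `b a` square-zero.
-/

open Submodule

section

variable {R : Type*} [Ring R]

lemma mem_zhouRadical_iff {x : R} :
    x ∈ zhouRadical R ↔
      ∀ I : Submodule Rᵐᵒᵖ R, IsCoatom I → IsEssentialRightIdeal R I → x ∈ I := by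
  simp only [zhouRadical, Set.mem_sInter, Set.mem_ofPred_eq]
  exact ⟨fun h I hc he => h I ⟨I, hc, he, rfl⟩, by rintro h _ ⟨I, hc, he, rfl⟩; exact h I hc he⟩

lemma IsEssentialRightIdeal.comap {I : Submodule Rᵐᵒᵖ R} (hI : IsEssentialRightIdeal R I)
    (f : R →ₗ[Rᵐᵒᵖ] R) : IsEssentialRightIdeal R (I.comap f) := by
  intro K hK
  have hKf : K.map f = ⊥ := hI _ (by rw [map_inf_eq_map_inf_comap, hK, Submodule.map_bot])
  have hKI : K ≤ I.comap f := (LinearMap.le_ker_iff_map.mpr hKf).trans (LinearMap.ker_le_comap f)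
  rwa [inf_eq_left.mpr hKI] at hK

lemma mem_of_isCoatom_of_forall_mul_mul_mem {I : Submodule Rᵐᵒᵖ R} (hI : IsCoatom I) {r : R}
    (h : ∀ s, r * s * r ∈ I) : r ∈ I := by
  by_contra hr
  have hsup : I ⊔ span Rᵐᵒᵖ {r} = ⊤ :=
    hI.2 _ (left_lt_sup.mpr fun hle => hr (hle (mem_span_singleton_self r)))
  obtain ⟨m, hm, _, hspan, hsum⟩ := mem_sup.mp (hsup ▸ mem_top : (1 : R) ∈ I ⊔ span Rᵐᵒᵖ {r})
  obtain ⟨a, rfl⟩ := mem_span_singleton.mp hspan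
  rw [MulOpposite.smul_eq_mul_unop] at hsum
  have hdecomp : r = m * r + r * a.unop * r := by rw [← add_mul, hsum, one_mul]
  exact hr (hdecomp ▸ I.add_mem (I.smul_mem (MulOpposite.op r) hm) (h a.unop))

namespace zhouRadical

lemma sub_mem {x y : R} (hx : x ∈ zhouRadical R) (hy : y ∈ zhouRadical R) :
    x - y ∈ zhouRadical R := by
  rw [mem_zhouRadical_iff] at hx hy ⊢
  exact fun I hc he => I.sub_mem (hx I hc he) (hy I hc he)

lemma mul_mem_right {x : R} (hx : x ∈ zhouRadical R) (s : R) : x * s ∈ zhouRadical R := by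
  rw [mem_zhouRadical_iff] at hx ⊢
  exact fun I hc he => I.smul_mem (MulOpposite.op s) (hx I hc he)

lemma mul_mem_left (s : R) {x : R} (hx : x ∈ zhouRadical R) : s * x ∈ zhouRadical R := by
  rw [mem_zhouRadical_iff] at hx ⊢
  intro I hc he
  change x ∈ I.comap (LinearMap.mulLeft Rᵐᵒᵖ s)
  rcases isCoatom_comap_or_eq_top (LinearMap.mulLeft Rᵐᵒᵖ s) hc with hc' | htop
  · exact hx _ hc' (he.comap _)
  · exact htop ▸ mem_top

lemma mem_of_forall_mul_mul_mem {r : R} (h : ∀ s, r * s * r ∈ zhouRadical R) :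
    r ∈ zhouRadical R :=
  mem_zhouRadical_iff.mpr fun I hc he =>
    mem_of_isCoatom_of_forall_mul_mul_mem hc fun s => mem_zhouRadical_iff.mp (h s) I hc he

end zhouRadical

end

/-- `R` is δ-reversible iff every square-zero element lies in `δ(R)`, iff every square-zero
element commutes with all elements modulo `δ(R)`. -/
theorem deltaReversible_tfae (R : Type*) [Ring R] :
    (IsDeltaReversible R ↔ ∀ r : R, r * r = 0 → r ∈ zhouRadical R) ∧
    ((∀ r : R, r * r = 0 → r ∈ zhouRadical R) ↔
      ∀ r : R, r * r = 0 → ∀ m : R, r * m - m * r ∈ zhouRadical R) := by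
  refine ⟨⟨fun h r hr => ?_, fun h a b hab => h _ ?_⟩, ⟨fun h r hr m => ?_, fun h r hr => ?_⟩⟩
  · refine zhouRadical.mem_of_forall_mul_mul_mem fun s => h r (r * s) ?_
    rw [← mul_assoc, hr, zero_mul]
  · calc b * a * (b * a) = b * (a * b) * a := by noncomm_ring
      _ = 0 := by rw [hab, mul_zero, zero_mul]
  · exact zhouRadical.sub_mem (zhouRadical.mul_mem_right (h r hr) m)
      (zhouRadical.mul_mem_left m (h r hr))
  · refine zhouRadical.mem_of_forall_mul_mul_mem fun s => ?_
    have hrsr : r * s * r = (r * s - s * r) * r := by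
      rw [sub_mul, mul_assoc s, hr, mul_zero, sub_zero]
    exact hrsr ▸ zhouRadical.mul_mem_right (h r hr s) r
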